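/- Let f ∈ C³([0,1)) satisfy f ≥ 0, f‴ ≥ 0, and lim_{t→1⁻} f(t) = +∞. Then f′(t) → +∞ as t → 1⁻ (in particular f′ > 0 near 1) and liminf_{t→1⁻} f(t)f″(t)/f′(t)² ≥ 1/2. -/

import Mathlib

/-! Since `f''' ≥ 0`, `f''` is monotone, so either `f'` is monotone near `1` — and then the
blow-up of `f` forces `f' → ∞` by the mean value inequality — or `f'` is bounded above, which is
incompatible with the blow-up of `f`. Moreover `(f'' f - f'^2/2)' = f''' f ≥ 0`, so
`f f'' ≥ f'^2/2 + C` on `[0,1)`; dividing by `f'^2 → ∞` gives the bound on the liminf. -/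

open MeasureTheory Set Filter Topology

/-- `f` is of class `C³([0,1))`, with derivatives `f'`, `f''`, `f'''`. -/
def C3On01 (f f' f'' f''' : ℝ → ℝ) : Prop :=
  (∀ t ∈ Ico (0:ℝ) 1, HasDerivWithinAt f (f' t) (Ico (0:ℝ) 1) t) ∧
  (∀ t ∈ Ico (0:ℝ) 1, HasDerivWithinAt f' (f'' t) (Ico (0:ℝ) 1) t) ∧
  (∀ t ∈ Ico (0:ℝ) 1, HasDerivWithinAt f'' (f''' t) (Ico (0:ℝ) 1) t) ∧
  ContinuousOn f''' (Ico (0:ℝ) 1)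

section Derivatives

variable {D : Set ℝ} {f f' f'' f''' : ℝ → ℝ}

theorem Convex.monotoneOn_of_hasDerivWithinAt_nonneg (hD : Convex ℝ D)
    (hf : ∀ x ∈ D, HasDerivWithinAt f (f' x) D x) (hf' : ∀ x ∈ D, 0 ≤ f' x) :
    MonotoneOn f D :=
  _root_.monotoneOn_of_hasDerivWithinAt_nonneg hD (fun x hx => (hf x hx).continuousWithinAt)
    (fun x hx => (hf x (interior_subset hx)).mono interior_subset)
    (fun x hx => hf' x (interior_subset hx))

theorem Convex.image_sub_le_mul_sub_of_hasDerivWithinAt_le (hD : Convex ℝ D) {C : ℝ}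
    (hf : ∀ x ∈ D, HasDerivWithinAt f (f' x) D x) (hf' : ∀ x ∈ D, f' x ≤ C)
    {x y : ℝ} (hx : x ∈ D) (hy : y ∈ D) (hxy : x ≤ y) :
    f y - f x ≤ C * (y - x) := by
  have hmono : MonotoneOn (fun t => C * t - f t) D :=
    hD.monotoneOn_of_hasDerivWithinAt_nonneg
      (fun t ht => ((hasDerivWithinAt_id t D).const_mul C).sub (hf t ht))
      (fun t ht => by simpa using hf' t ht)
  linarith [hmono hx hy hxy]

theorem Convex.monotoneOn_mul_sub_sq_div_two (hD : Convex ℝ D)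
    (hf : ∀ x ∈ D, HasDerivWithinAt f (f' x) D x)
    (hf' : ∀ x ∈ D, HasDerivWithinAt f' (f'' x) D x)
    (hf'' : ∀ x ∈ D, HasDerivWithinAt f'' (f''' x) D x)
    (hnonneg : ∀ x ∈ D, 0 ≤ f''' x * f x) :
    MonotoneOn (fun t => f'' t * f t - f' t ^ 2 / 2) D :=
  hD.monotoneOn_of_hasDerivWithinAt_nonneg
    (fun x hx => (((hf'' x hx).mul (hf x hx)).sub ((hf' x hx).pow 2 |>.div_const 2)).congr_deriv
      (by push_cast; ring))
    hnonneg

end Derivatives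

section BlowUp

variable {a b : ℝ} {f f' f'' : ℝ → ℝ}

theorem not_tendsto_atTop_of_hasDerivWithinAt_le (hab : a < b) {C : ℝ}
    (hf : ∀ x ∈ Ico a b, HasDerivWithinAt f (f' x) (Ico a b) x) (hf' : ∀ x ∈ Ico a b, f' x ≤ C) :
    ¬ Tendsto f (𝓝[<] b) atTop := by
  intro hblow
  obtain ⟨t, hft, ht⟩ :=
    ((hblow.eventually_gt_atTop (f a + |C| * (b - a))).and (Ico_mem_nhdsLT hab)).exists
  have hbound := (convex_Ico a b).image_sub_le_mul_sub_of_hasDerivWithinAt_le hf hf'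
    (left_mem_Ico.2 hab) ht ht.1
  have : C * (t - a) ≤ |C| * (b - a) :=
    mul_le_mul (le_abs_self C) (by linarith [ht.2]) (by linarith [ht.1]) (abs_nonneg C)
  linarith

theorem tendsto_deriv_atTop_of_monotoneOn (hab : a < b)
    (hf : ∀ x ∈ Ico a b, HasDerivWithinAt f (f' x) (Ico a b) x) (hf' : MonotoneOn f' (Ico a b))
    (hblow : Tendsto f (𝓝[<] b) atTop) :
    Tendsto f' (𝓝[<] b) atTop := by
  have hslope : Tendsto (fun t => (f t - f a) / (b - a)) (𝓝[<] b) atTop :=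
    (tendsto_atTop_add_const_right _ _ hblow).atTop_div_const (sub_pos.2 hab)
  refine tendsto_atTop_mono' _ ?_ hslope
  filter_upwards [hblow.eventually_ge_atTop (f a), Ioo_mem_nhdsLT hab] with t hft ht
  have hsub : Icc a t ⊆ Ico a b := Icc_subset_Ico_right ht.2
  have hbound : f t - f a ≤ f' t * (t - a) :=
    (convex_Icc a t).image_sub_le_mul_sub_of_hasDerivWithinAt_le
      (fun x hx => (hf x (hsub hx)).mono hsub)
      (fun x hx => hf' (hsub hx) (hsub (right_mem_Icc.2 ht.1.le)) hx.2)
      (left_mem_Icc.2 ht.1.le) (right_mem_Icc.2 ht.1.le) ht.1.le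
  rw [div_le_iff₀ (sub_pos.2 hab)]
  nlinarith [ht.1, ht.2]

theorem tendsto_deriv_atTop_of_monotoneOn_deriv (hab : a < b)
    (hf : ∀ x ∈ Ico a b, HasDerivWithinAt f (f' x) (Ico a b) x)
    (hf' : ∀ x ∈ Ico a b, HasDerivWithinAt f' (f'' x) (Ico a b) x)
    (hf'' : MonotoneOn f'' (Ico a b)) (hblow : Tendsto f (𝓝[<] b) atTop) :
    Tendsto f' (𝓝[<] b) atTop := by
  by_cases hconvex : ∃ c ∈ Ico a b, 0 ≤ f'' c
  · obtain ⟨c, hc, hf''c⟩ := hconvex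
    have hsub : Ico c b ⊆ Ico a b := Ico_subset_Ico_left hc.1
    refine tendsto_deriv_atTop_of_monotoneOn hc.2 (fun x hx => (hf x (hsub hx)).mono hsub) ?_ hblow
    exact (convex_Ico c b).monotoneOn_of_hasDerivWithinAt_nonneg
      (fun x hx => (hf' x (hsub hx)).mono hsub)
      (fun x hx => hf''c.trans (hf'' hc (hsub hx) hx.1))
  · push Not at hconvex
    have hneg : MonotoneOn (fun x => -f' x) (Ico a b) :=
      (convex_Ico a b).monotoneOn_of_hasDerivWithinAt_nonneg
        (fun x hx => (hf' x hx).neg) (fun x hx => neg_nonneg.2 (hconvex x hx).le)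
    have hanti : AntitoneOn f' (Ico a b) := fun x hx y hy hxy => neg_le_neg_iff.1 (hneg hx hy hxy)
    exact absurd hblow <| not_tendsto_atTop_of_hasDerivWithinAt_le hab hf
      (fun x hx => hanti (left_mem_Ico.2 hab) hx hx.1)

end BlowUp

theorem le_liminf_div_of_add_mul_le {α : Type*} {l : Filter α} [l.NeBot] {u w : α → ℝ} {c k : ℝ}
    (hw : Tendsto w l atTop) (hu : ∀ᶠ x in l, c + k * w x ≤ u x) :
    (k : EReal) ≤ liminf (fun x => ((u x / w x : ℝ) : EReal)) l := by
  have hlower : Tendsto (fun x => ((c / w x + k : ℝ) : EReal)) l (𝓝 k) := by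
    have := (tendsto_const_nhds (x := c)).div_atTop hw |>.add_const k
    rw [zero_add] at this
    exact (continuous_coe_real_ereal.tendsto k).comp this
  rw [← hlower.liminf_eq]
  refine liminf_le_liminf ?_
  filter_upwards [hu, hw.eventually_gt_atTop 0] with x hux hwx
  rw [EReal.coe_le_coe_iff, div_add' _ _ _ hwx.ne', div_le_div_iff_of_pos_right hwx]
  linarith

/-- If `f ∈ C³([0,1))` satisfies `f ≥ 0`, `f''' ≥ 0` and `f(t) → +∞` as
`t → 1⁻`, then `f'(t) → +∞` as `t → 1⁻` (in particular `f' > 0` near `1`) and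
`liminf_{t→1⁻} f f''/f'² ≥ 1/2` (in `EReal`). -/
theorem stmt15 (f f' f'' f''' : ℝ → ℝ)
    (hC3 : C3On01 f f' f'' f''')
    (hf0 : ∀ t ∈ Ico (0:ℝ) 1, 0 ≤ f t)
    (hf'''0 : ∀ t ∈ Ico (0:ℝ) 1, 0 ≤ f''' t)
    (hblow : Tendsto f (𝓝[<] (1:ℝ)) atTop) :
    Tendsto f' (𝓝[<] (1:ℝ)) atTop ∧
    (∀ᶠ t in 𝓝[<] (1:ℝ), 0 < f' t) ∧
    ((1/2 : ℝ) : EReal) ≤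
      Filter.liminf (fun t => ((f t * f'' t / f' t ^ 2 : ℝ) : EReal)) (𝓝[<] (1:ℝ)) := by
  obtain ⟨hf, hf', hf'', -⟩ := hC3
  have hf''_mono : MonotoneOn f'' (Ico 0 1) :=
    (convex_Ico 0 1).monotoneOn_of_hasDerivWithinAt_nonneg hf'' hf'''0
  have hf'_top : Tendsto f' (𝓝[<] 1) atTop :=
    tendsto_deriv_atTop_of_monotoneOn_deriv zero_lt_one hf hf' hf''_mono hblow
  refine ⟨hf'_top, hf'_top.eventually_gt_atTop 0, ?_⟩
  have hg := (convex_Ico 0 1).monotoneOn_mul_sub_sq_div_two hf hf' hf''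
    (fun t ht => mul_nonneg (hf'''0 t ht) (hf0 t ht))
  refine le_liminf_div_of_add_mul_le ((tendsto_pow_atTop two_ne_zero).comp hf'_top)
    (c := f'' 0 * f 0 - f' 0 ^ 2 / 2) ?_
  filter_upwards [Ico_mem_nhdsLT zero_lt_one] with t ht
  have := hg (left_mem_Ico.2 zero_lt_one) ht ht.1
  linarith
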